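/- arXiv:math/0308124 — 2 statements merged into one kernel-verified Lean document; each statement's English description precedes it below -/
import Mathlib

section
/- In the zero-temperature Domany cellular automaton on the hexagonal lattice, if at some time n a site x belongs to a simple loop of the hexagonal lattice all of whose sites have the same spin value, then the spin at x never flips at any later time: σ^m_x = σ^n_x for all m ≥ n. -/
variable {V : Type*}

/-- The majority value of the spins of the neighbors of `x` (true = +1). -/
def maj (G : SimpleGraph V) [G.LocallyFinite] (σ : V → Bool) (x : V) : Bool :=
  decide (2 ≤ ((G.neighborFinset x).filter (fun y => σ y = true)).card)

open Classical in
/-- The zero-temperature Domany dynamics: sites in `A` are updated (to the majority of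
their neighbors) at odd times, sites in `B` at even times. -/
noncomputable def domanyTraj (G : SimpleGraph V) [G.LocallyFinite] (A B : Set V)
    (σ0 : V → Bool) : ℕ → V → Bool
  | 0 => σ0
  | n + 1 => fun x =>
      if x ∈ (if (n + 1) % 2 = 1 then A else B) then
        maj G (domanyTraj G A B σ0 n) x
      else
        domanyTraj G A B σ0 n x

/-- A simple loop in the graph `G`, given as an injective cyclic sequence of
pairwise adjacent consecutive sites. -/
def IsHLoop (G : SimpleGraph V) {k : ℕ} (c : ZMod k → V) : Prop :=
  3 ≤ k ∧ Function.Injective c ∧ ∀ i, G.Adj (c i) (c (i + 1))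

lemma maj_loop (G : SimpleGraph V) [G.LocallyFinite]
    (hdeg : ∀ v, G.degree v = 3) {k : ℕ} {c : ZMod k → V}
    (hl : IsHLoop G c) (σ : V → Bool) (s : Bool)
    (h : ∀ i, σ (c i) = s) (i : ZMod k) : maj G σ (c i) = s := by
  classical
  obtain ⟨hk, hinj, hadj⟩ := hl
  haveI : NeZero k := ⟨by omega⟩
  have hne : c (i - 1) ≠ c (i + 1) := by
    intro he
    have h1 : i - 1 = i + 1 := hinj he
    have h3 : k ∣ 2 := (ZMod.natCast_eq_zero_iff 2 k).mp (by push_cast; linear_combination -h1)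
    have := Nat.le_of_dvd (by norm_num) h3
    omega
  have hm1 : c (i - 1) ∈ G.neighborFinset (c i) := by
    rw [SimpleGraph.mem_neighborFinset]
    have := (hadj (i - 1)).symm
    simpa using this
  have hp1 : c (i + 1) ∈ G.neighborFinset (c i) := by
    rw [SimpleGraph.mem_neighborFinset]
    exact hadj i
  have hcardN : (G.neighborFinset (c i)).card = 3 := hdeg (c i)
  cases s with
  | true =>
    have hsub : ({c (i - 1), c (i + 1)} : Finset V) ⊆
        (G.neighborFinset (c i)).filter (fun y => σ y = true) := by
      intro y hy
      simp only [Finset.mem_insert, Finset.mem_singleton] at hy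
      rcases hy with rfl | rfl <;>
        simp [Finset.mem_filter, hm1, hp1, h (i - 1), h (i + 1)]
    have h2 : 2 ≤ ((G.neighborFinset (c i)).filter (fun y => σ y = true)).card := by
      calc 2 = ({c (i - 1), c (i + 1)} : Finset V).card := (Finset.card_pair hne).symm
        _ ≤ _ := Finset.card_le_card hsub
    simp [maj, h2]
  | false =>
    have hsub : (G.neighborFinset (c i)).filter (fun y => σ y = true) ⊆
        (G.neighborFinset (c i)) \ ({c (i - 1), c (i + 1)} : Finset V) := by
      intro y hy
      simp only [Finset.mem_filter] at hy
      simp only [Finset.mem_sdiff, Finset.mem_insert, Finset.mem_singleton]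
      refine ⟨hy.1, ?_⟩
      rintro (rfl | rfl)
      · simp [h (i - 1)] at hy
      · simp [h (i + 1)] at hy
    have hsub2 : ({c (i - 1), c (i + 1)} : Finset V) ⊆ G.neighborFinset (c i) := by
      intro y hy
      simp only [Finset.mem_insert, Finset.mem_singleton] at hy
      rcases hy with rfl | rfl <;> assumption
    have h2 : ((G.neighborFinset (c i)).filter (fun y => σ y = true)).card ≤ 1 := by
      calc _ ≤ ((G.neighborFinset (c i)) \ ({c (i - 1), c (i + 1)} : Finset V)).card :=
            Finset.card_le_card hsub
        _ = 3 - 2 := by rw [Finset.card_sdiff_of_subset hsub2, hcardN, Finset.card_pair hne]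
        _ ≤ 1 := by norm_num
    simp only [maj, decide_eq_false_iff_not]
    omega

/-- if at time `n` the site `x` belongs to a constant-sign simple loop of the
hexagonal lattice, then the spin at `x` never flips afterwards. -/
theorem domany_loop_stable (G : SimpleGraph V) [G.LocallyFinite] (A B : Set V)
    (hdeg : ∀ v, G.degree v = 3)
    (hpart : ∀ v, v ∈ A ↔ v ∉ B)
    (hbip : ∀ ⦃x y⦄, G.Adj x y → (x ∈ A ↔ y ∈ B))
    (σ0 : V → Bool) (n : ℕ) (x : V)
    (hloop : ∃ (k : ℕ) (c : ZMod k → V), IsHLoop G c ∧ (∃ i, c i = x) ∧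
      ∃ s : Bool, ∀ i, domanyTraj G A B σ0 n (c i) = s) :
    ∀ m, n ≤ m → domanyTraj G A B σ0 m x = domanyTraj G A B σ0 n x := by
  obtain ⟨k, c, hl, ⟨i0, hi0⟩, s, hs⟩ := hloop
  have key : ∀ d : ℕ, ∀ i : ZMod k, domanyTraj G A B σ0 (n + d) (c i) = s := by
    intro d
    induction d with
    | zero => simpa using hs
    | succ d ih =>
      intro i
      have : n + (d + 1) = (n + d) + 1 := by omega
      rw [this, domanyTraj]
      dsimp only
      by_cases hc : c i ∈ if (n + d + 1) % 2 = 1 then A else B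
      · rw [if_pos hc]; exact maj_loop G hdeg hl _ s ih i
      · rw [if_neg hc]; exact ih i
  intro m hm
  have hxn : domanyTraj G A B σ0 n x = s := hi0 ▸ hs i0
  have hxm : domanyTraj G A B σ0 m x = s := by
    have : m = n + (m - n) := by omega
    rw [this]
    exact hi0 ▸ key (m - n) i0
  rw [hxn, hxm]
end

section
/- If P is a Bernoulli product measure with parameter p on {-1,+1}^V for a countable set V, and E, F are increasing events (with respect to the partial order where +1 ≥ -1 coordinatewise), then P(E ∩ F) ≥ P(E)·P(F) (FKG/Harris inequality). -/
/-!
Conditioning a product measure on the coordinates in a finite set `s` leaves the other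
coordinates with their original law. Hence `P[1_G | coordinates in s]` is the probability of `G`
once the coordinates in `s` are frozen, which is increasing in the frozen values when `G` is
increasing. The law of the coordinates in `s` is a product, so its weights are modular on the
finite distributive lattice `s → α`, and the finite FKG inequality gives
`P(E) P(F) ≤ E[P[1_E | s] P[1_F | s]]`. Letting `s` exhaust the countable set `V`, Lévy's upward
theorem and dominated convergence turn the right-hand side into `P(E ∩ F)`.
-/

open MeasureTheory Filter Topology Set Function
open scoped ENNReal

section FiniteValued

variable {Ω β : Type*} [MeasurableSpace Ω] [MeasurableSpace β] [MeasurableSingletonClass β]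
  {μ : Measure Ω} {f : Ω → β}

lemma integral_comp_eq_sum [Fintype β] [IsFiniteMeasure μ] (hf : Measurable f) (g : β → ℝ) :
    ∫ ω, g (f ω) ∂μ = ∑ x, μ.real (f ⁻¹' {x}) * g x := by
  rw [← integral_map hf.aemeasurable (measurable_of_finite g).aestronglyMeasurable,
    integral_fintype .of_finite]
  simp [map_measureReal_apply hf (measurableSet_singleton _)]

lemma setIntegral_preimage_finset (hf : Measurable f) {h : Ω → ℝ} (hh : Integrable h μ)
    (S : Finset β) : ∫ ω in f ⁻¹' S, h ω ∂μ = ∑ x ∈ S, ∫ ω in f ⁻¹' {x}, h ω ∂μ := by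
  rw [← integral_biUnion_finset S (fun x _ => hf (measurableSet_singleton x))
    (pairwiseDisjoint_fiber f S) fun _ _ => hh.integrableOn, ← Finset.set_biUnion_coe,
    biUnion_preimage_singleton]

lemma condExp_comap_ae_eq [Finite β] [IsFiniteMeasure μ] (hf : Measurable f) {h : Ω → ℝ}
    (hh : Integrable h μ) {g : β → ℝ}
    (hfib : ∀ x, ∫ ω in f ⁻¹' {x}, h ω ∂μ = μ.real (f ⁻¹' {x}) * g x) :
    μ[h | MeasurableSpace.comap f ‹_›] =ᵐ[μ] g ∘ f := by
  have hgf : Integrable (g ∘ f) μ := Integrable.of_finite.comp_measurable hf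
  refine (ae_eq_condExp_of_forall_setIntegral_eq hf.comap_le hh (fun _ _ _ => hgf.integrableOn)
    (fun A hA _ => ?_)
    ((measurable_of_finite g).comp (comap_measurable f)).aestronglyMeasurable).symm
  obtain ⟨S, -, rfl⟩ := hA
  lift S to Finset β using S.toFinite
  rw [setIntegral_preimage_finset hf hgf, setIntegral_preimage_finset hf hh]
  refine Finset.sum_congr rfl fun x _ => ?_
  have hconst : EqOn (g ∘ f) (fun _ => g x) (f ⁻¹' {x}) := fun _ hω => congrArg g hω
  rw [hfib, setIntegral_congr_fun (hf (measurableSet_singleton x)) hconst, setIntegral_const,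
    smul_eq_mul]

end FiniteValued

section Limit

variable {Ω : Type*} {m0 : MeasurableSpace Ω} {μ : Measure Ω} [IsFiniteMeasure μ]

lemma tendsto_integral_condExp_indicator_mul (ℱ : Filtration ℕ m0) (hℱ : ⨆ n, ℱ n = m0)
    {E F : Set Ω} (hE : MeasurableSet E) (hF : MeasurableSet F) :
    Tendsto (fun n => ∫ ω, μ[E.indicator 1 | ℱ n] ω * μ[F.indicator 1 | ℱ n] ω ∂μ) atTop
      (𝓝 (μ.real (E ∩ F))) := by
  have hconv {G : Set Ω} (hG : MeasurableSet G) : ∀ᵐ ω ∂μ,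
      Tendsto (fun n => μ[G.indicator 1 | ℱ n] ω) atTop (𝓝 (G.indicator 1 ω)) :=
    ((integrable_const 1).indicator hG).tendsto_ae_condExp
      (by rw [hℱ]; exact stronglyMeasurable_const.indicator hG)
  have hbdd (G : Set Ω) (n : ℕ) : ∀ᵐ ω ∂μ, |μ[G.indicator (1 : Ω → ℝ) | ℱ n] ω| ≤ 1 :=
    ae_bdd_abs_condExp_of_ae_bdd_abs (ae_of_all _ fun ω => by
      by_cases hω : ω ∈ G <;> simp [hω])
  rw [← integral_indicator_one (hE.inter hF), inter_indicator_one]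
  refine tendsto_integral_of_dominated_convergence (fun _ => 1) (fun n => ?_) (integrable_const 1)
    (fun n => ?_) ?_
  · exact ((stronglyMeasurable_condExp.mono (ℱ.le n)).mul
      (stronglyMeasurable_condExp.mono (ℱ.le n))).aestronglyMeasurable
  · filter_upwards [hbdd E n, hbdd F n] with ω hEω hFω
    rw [Real.norm_eq_abs, abs_mul]
    exact mul_le_one₀ hEω (abs_nonneg _) hFω
  · filter_upwards [hconv hE, hconv hF] with ω hEω hFω using hEω.mul hFω

end Limit

def MeasureTheory.Filtration.comp {Ω ι κ : Type*} {m : MeasurableSpace Ω} [Preorder ι]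
    [Preorder κ] (ℱ : Filtration ι m) {u : κ → ι} (hu : Monotone u) : Filtration κ m where
  seq k := ℱ (u k)
  mono' _ _ hkl := ℱ.mono (hu hkl)
  le' k := ℱ.le (u k)

lemma iSup_piFinset_eq_pi {ι : Type*} {X : ι → Type*} [∀ i, MeasurableSpace (X i)]
    {s : ℕ → Finset ι} (hs : ∀ i, ∃ n, i ∈ s n) :
    ⨆ n, Filtration.piFinset (X := X) (s n) = MeasurableSpace.pi := by
  refine le_antisymm (iSup_le fun n => Filtration.piFinset.le _) (iSup_le fun i => ?_)
  obtain ⟨n, hn⟩ := hs i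
  exact le_iSup_of_le n
    ((measurable_pi_apply (⟨i, hn⟩ : s n)).comp (comap_measurable (s n).restrict)).comap_le

lemma exists_monotone_finset_seq_forall_mem (V : Type*) [Countable V] :
    ∃ s : ℕ → Finset V, Monotone s ∧ ∀ v, ∃ n, v ∈ s n := by
  obtain ⟨s, hmono, hs⟩ := exists_seq_monotone_tendsto_atTop_atTop (Finset V)
  exact ⟨s, hmono, fun v => (hs.eventually_ge_atTop {v}).exists.imp fun _ hn =>
    hn (Finset.mem_singleton_self v)⟩

lemma prod_apply_inf_mul_prod_apply_sup {ι α M : Type*} [Fintype ι] [LinearOrder α]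
    [CommMonoid M] (g : ι → α → M) (a b : ι → α) :
    (∏ i, g i ((a ⊓ b) i)) * ∏ i, g i ((a ⊔ b) i) = (∏ i, g i (a i)) * ∏ i, g i (b i) := by
  simp only [← Finset.prod_mul_distrib]
  refine Finset.prod_congr rfl fun i _ => ?_
  rcases le_total (a i) (b i) with h | h <;> simp [h, mul_comm]

lemma Function.updateFinset_mono {V α : Type*} [DecidableEq V] [Preorder α] (η : V → α)
    (s : Finset V) {x y : s → α} (hxy : x ≤ y) : updateFinset η s x ≤ updateFinset η s y :=
  fun v => by
    unfold updateFinset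
    split_ifs
    exacts [hxy _, le_rfl]

section Cylinders

variable {V α : Type*}

lemma preimage_restrict_singleton_restrict (s : Finset V) (f : V → α) :
    s.restrict ⁻¹' ({s.restrict f} : Set (s → α)) = {ω | EqOn ω f s} := by
  ext ω
  simp [funext_iff, EqOn]

variable [MeasurableSpace α] [MeasurableSingletonClass α]

lemma measurableSet_eqOn (s : Finset V) (f : V → α) :
    MeasurableSet {ω : V → α | EqOn ω f s} := by
  rw [← preimage_restrict_singleton_restrict]
  exact s.measurable_restrict (measurableSet_singleton _)

lemma MeasureTheory.Measure.ext_of_eqOn_cylinders [Finite α] {μ ν : Measure (V → α)}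
    [IsFiniteMeasure μ]
    (h : ∀ (s : Finset V) (f : V → α), μ {ω | EqOn ω f s} = ν {ω | EqOn ω f s}) : μ = ν := by
  have hfib (s : Finset V) (x : s → α) : μ (s.restrict ⁻¹' {x}) = ν (s.restrict ⁻¹' {x}) := by
    rcases (s.restrict ⁻¹' {x} : Set (V → α)).eq_empty_or_nonempty with hx | ⟨ω, rfl⟩
    · rw [hx, measure_empty, measure_empty]
    · rw [preimage_restrict_singleton_restrict]
      exact h s ω
  have huniv : (∅ : Finset V).restrict ⁻¹' {isEmptyElim} = (univ : Set (V → α)) :=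
    eq_univ_of_forall fun _ => Subsingleton.elim _ _
  have : IsFiniteMeasure ν := ⟨by
    rw [← huniv, ← hfib]
    exact measure_lt_top μ _⟩
  refine IsProjectiveLimit.unique (P := fun s : Finset V => ν.map s.restrict)
    (fun s => Measure.ext_iff_singleton.mpr fun x => ?_) (fun _ => rfl)
  rw [Measure.map_apply s.measurable_restrict (measurableSet_singleton x),
    Measure.map_apply s.measurable_restrict (measurableSet_singleton x), hfib]

end Cylinders

section ProductMeasure

variable {V α : Type*} [MeasurableSpace α]

def IsProductMeasure (P : Measure (V → α)) (w : V → α → ℝ≥0∞) : Prop :=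
  ∀ (s : Finset V) (f : V → α), P {ω | EqOn ω f s} = ∏ v ∈ s, w v (f v)

noncomputable def probGiven [DecidableEq V] (P : Measure (V → α)) (G : Set (V → α))
    (s : Finset V) (x : s → α) : ℝ :=
  P.real ((updateFinset · s x) ⁻¹' G)

variable {P : Measure (V → α)} {w : V → α → ℝ≥0∞} {G : Set (V → α)}

lemma probGiven_mono [DecidableEq V] [Preorder α] [IsFiniteMeasure P] (hG : IsUpperSet G)
    (s : Finset V) : Monotone (probGiven P G s) :=
  fun _ _ hxy => measureReal_mono fun _ hη => hG (updateFinset_mono _ s hxy) hη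

namespace IsProductMeasure

lemma isProbabilityMeasure [Nonempty α] (hP : IsProductMeasure P w) : IsProbabilityMeasure P := by
  constructor
  simpa using hP ∅ fun _ => Classical.arbitrary α

variable [DecidableEq V]

lemma measure_preimage_restrict [Nonempty (V → α)] (hP : IsProductMeasure P w) (s : Finset V)
    (x : s → α) : P (s.restrict ⁻¹' {x}) = ∏ v : s, w v (x v) := by
  obtain ⟨ω₀⟩ := ‹Nonempty (V → α)›
  have hx : s.restrict (updateFinset ω₀ s x) = x := restrict_updateFinset ω₀ x
  rw [← hx, preimage_restrict_singleton_restrict, hP, ← Finset.prod_coe_sort]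
  rfl

lemma measure_inter_of_disjoint (hP : IsProductMeasure P w) {s t : Finset V} (hst : Disjoint s t)
    (f g : V → α) :
    P ({ω | EqOn ω f s} ∩ {ω | EqOn ω g t}) = P {ω | EqOn ω f s} * P {ω | EqOn ω g t} := by
  have hunion : {ω | EqOn ω f s} ∩ {ω | EqOn ω g t} =
      {ω | EqOn ω (s.piecewise f g) ↑(s ∪ t)} := by
    have hs : EqOn (s.piecewise f g) f s := fun v hv => s.piecewise_eq_of_mem f g hv
    have ht : EqOn (s.piecewise f g) g t := fun v hv =>
      s.piecewise_eq_of_notMem f g (Finset.disjoint_right.mp hst hv)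
    ext ω
    simp only [mem_inter_iff, mem_ofPred_eq, Finset.coe_union, eqOn_union]
    exact ⟨fun ⟨hf, hg⟩ => ⟨hf.trans hs.symm, hg.trans ht.symm⟩,
      fun ⟨hf, hg⟩ => ⟨hf.trans hs, hg.trans ht⟩⟩
  rw [hunion, hP, hP, hP, Finset.prod_union hst]
  congr 1
  · exact Finset.prod_congr rfl fun v hv => by rw [s.piecewise_eq_of_mem f g hv]
  · exact Finset.prod_congr rfl fun v hv => by
      rw [s.piecewise_eq_of_notMem f g (Finset.disjoint_right.mp hst hv)]

section Conditioning

variable [MeasurableSingletonClass α] [Finite α] [IsFiniteMeasure P]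

lemma restrict_eqOn_eq_smul_map (hP : IsProductMeasure P w) (s : Finset V) (f : V → α) :
    P.restrict {ω | EqOn ω f s} =
      P {ω | EqOn ω f s} • P.map (updateFinset · s (s.restrict f)) := by
  refine Measure.ext_of_eqOn_cylinders fun t g => ?_
  rw [Measure.restrict_apply (measurableSet_eqOn t g), Measure.smul_apply, smul_eq_mul,
    Measure.map_apply measurable_updateFinset_left (measurableSet_eqOn t g)]
  by_cases hfg : EqOn f g ↑(s ∩ t)
  · have hinter : {ω | EqOn ω g t} ∩ {ω | EqOn ω f s} =
        {ω | EqOn ω f s} ∩ {ω | EqOn ω g ↑(t \ s)} := by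
      ext ω
      simp only [mem_inter_iff, mem_ofPred_eq, Finset.coe_sdiff, Finset.coe_inter] at hfg ⊢
      constructor
      · rintro ⟨hg, hf⟩
        exact ⟨hf, hg.mono sdiff_subset⟩
      · rintro ⟨hf, hg⟩
        refine ⟨fun v hv => ?_, hf⟩
        by_cases hvs : v ∈ s
        · rw [hf hvs, hfg ⟨hvs, hv⟩]
        · exact hg ⟨hv, hvs⟩
    have hpre : (updateFinset · s (s.restrict f)) ⁻¹' {ω | EqOn ω g t} =
        {ω | EqOn ω g ↑(t \ s)} := by
      ext η
      simp only [mem_preimage, mem_ofPred_eq]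
      constructor
      · intro h v hv
        rw [Finset.coe_sdiff, Set.mem_sdiff, Finset.mem_coe, Finset.mem_coe] at hv
        simpa [updateFinset, hv.2] using h hv.1
      · intro h v hvt
        by_cases hvs : v ∈ s
        · simpa [updateFinset, hvs] using hfg (Finset.mem_inter.mpr ⟨hvs, hvt⟩)
        · simpa [updateFinset, hvs] using h (Finset.mem_sdiff.mpr ⟨hvt, hvs⟩)
    rw [hinter, hpre, hP.measure_inter_of_disjoint Finset.disjoint_sdiff]
  · obtain ⟨v, hv, hne⟩ : ∃ v ∈ s ∩ t, f v ≠ g v := by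
      by_contra! h
      exact hfg fun v hv => h v hv
    obtain ⟨hvs, hvt⟩ := Finset.mem_inter.mp hv
    have hinter : {ω | EqOn ω g t} ∩ {ω | EqOn ω f s} = ∅ :=
      eq_empty_of_forall_notMem fun ω ⟨hg, hf⟩ => hne ((hf hvs).symm.trans (hg hvt))
    have hpre : (updateFinset · s (s.restrict f)) ⁻¹' {ω | EqOn ω g t} = ∅ :=
      eq_empty_of_forall_notMem fun η hη => hne (by simpa [updateFinset, hvs] using hη hvt)
    rw [hinter, hpre, measure_empty, mul_zero]

lemma measure_inter_preimage_restrict (hP : IsProductMeasure P w) (hG : MeasurableSet G)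
    (s : Finset V) (x : s → α) :
    P (G ∩ s.restrict ⁻¹' {x}) = P (s.restrict ⁻¹' {x}) * P ((updateFinset · s x) ⁻¹' G) := by
  rcases (s.restrict ⁻¹' {x} : Set (V → α)).eq_empty_or_nonempty with hx | ⟨ω, rfl⟩
  · rw [hx, inter_empty, measure_empty, zero_mul]
  · have h := congrArg (· G) (hP.restrict_eqOn_eq_smul_map s ω)
    rwa [Measure.restrict_apply hG, Measure.smul_apply, smul_eq_mul,
      Measure.map_apply measurable_updateFinset_left hG,
      ← preimage_restrict_singleton_restrict] at h

lemma condExp_indicator_piFinset (hP : IsProductMeasure P w) (hG : MeasurableSet G)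
    (s : Finset V) :
    P[G.indicator 1 | Filtration.piFinset s] =ᵐ[P] probGiven P G s ∘ s.restrict :=
  condExp_comap_ae_eq s.measurable_restrict ((integrable_const 1).indicator hG) fun x => by
    simp only [setIntegral_indicator hG, Pi.one_apply, setIntegral_const, smul_eq_mul, mul_one]
    rw [inter_comm, probGiven, measureReal_def, measureReal_def, measureReal_def,
      hP.measure_inter_preimage_restrict hG, ENNReal.toReal_mul]

end Conditioning

lemma measureReal_mul_le_integral_condExp_mul [MeasurableSingletonClass α] [LinearOrder α]
    [Fintype α] [IsProbabilityMeasure P] (hP : IsProductMeasure P w) {E F : Set (V → α)}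
    (hE : MeasurableSet E) (hF : MeasurableSet F) (hEup : IsUpperSet E) (hFup : IsUpperSet F)
    (s : Finset V) :
    P.real E * P.real F ≤ ∫ ω, P[E.indicator 1 | Filtration.piFinset s] ω *
      P[F.indicator 1 | Filtration.piFinset s] ω ∂P := by
  have := nonempty_of_isProbabilityMeasure P
  set μ : (s → α) → ℝ := fun x => P.real (s.restrict ⁻¹' {x})
  have hsum (G : Set (V → α)) (hG : MeasurableSet G) :
      P.real G = ∑ x, μ x * probGiven P G s x := by
    rw [← integral_indicator_one hG, ← integral_condExp (Filtration.piFinset.le s),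
      integral_congr_ae (hP.condExp_indicator_piFinset hG s)]
    exact integral_comp_eq_sum s.measurable_restrict _
  have hone : ∑ x, μ x = 1 := by simpa [probGiven] using (hsum univ .univ).symm
  have hμ (a b : s → α) : μ a * μ b ≤ μ (a ⊓ b) * μ (a ⊔ b) := by
    simp only [μ, measureReal_def, hP.measure_preimage_restrict, ENNReal.toReal_prod]
    exact (prod_apply_inf_mul_prod_apply_sup (fun (v : s) a => (w v a).toReal) a b).ge
  have hfkg := fkg (probGiven P E s) (probGiven P F s) μ (fun _ => measureReal_nonneg)
    (fun _ => measureReal_nonneg) (fun _ => measureReal_nonneg) (probGiven_mono hEup s)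
    (probGiven_mono hFup s) hμ
  rw [hone, one_mul] at hfkg
  rw [hsum E hE, hsum F hF]
  refine hfkg.trans_eq ((integral_comp_eq_sum (μ := P) s.measurable_restrict
    fun x => probGiven P E s x * probGiven P F s x).symm.trans (integral_congr_ae ?_))
  exact ((hP.condExp_indicator_piFinset hE s).mul (hP.condExp_indicator_piFinset hF s)).symm

end IsProductMeasure

end ProductMeasure

theorem bernoulli_product_FKG_general {V : Type*} [Countable V]
    (p : ℝ)
    (P : Measure (V → Bool))
    (hP : ∀ (s : Finset V) (f : V → Bool),
      P {ω | ∀ v ∈ s, ω v = f v} =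
        ∏ v ∈ s, (if f v then ENNReal.ofReal p else ENNReal.ofReal (1 - p)))
    (E F : Set (V → Bool)) (hE : MeasurableSet E) (hF : MeasurableSet F)
    (hEinc : ∀ ω ω' : V → Bool, (∀ v, ω v ≤ ω' v) → ω ∈ E → ω' ∈ E)
    (hFinc : ∀ ω ω' : V → Bool, (∀ v, ω v ≤ ω' v) → ω ∈ F → ω' ∈ F) :
    P E * P F ≤ P (E ∩ F) := by
  classical
  have hprod : IsProductMeasure P
      fun _ b => if b then ENNReal.ofReal p else ENNReal.ofReal (1 - p) := hP
  have := hprod.isProbabilityMeasure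
  obtain ⟨s, hs_mono, hs_cover⟩ := exists_monotone_finset_seq_forall_mem V
  have hlim := tendsto_integral_condExp_indicator_mul (μ := P) (Filtration.piFinset.comp hs_mono)
    (iSup_piFinset_eq_pi hs_cover) hE hF
  have hreal : P.real E * P.real F ≤ P.real (E ∩ F) :=
    ge_of_tendsto' hlim fun n => hprod.measureReal_mul_le_integral_condExp_mul hE hF
      (fun _ _ h => hEinc _ _ h) (fun _ _ h => hFinc _ _ h) (s n)
  rw [← ofReal_measureReal, ← ofReal_measureReal, ← ofReal_measureReal,
    ← ENNReal.ofReal_mul measureReal_nonneg]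
  exact ENNReal.ofReal_le_ofReal hreal

/-- Harris/FKG inequality: for a Bernoulli(p) product measure on
`{-1,+1}^V ≃ (V → Bool)` (true = +1) over a countable set `V`, and increasing
events `E`, `F`, one has `P(E ∩ F) ≥ P(E) · P(F)`. -/
theorem bernoulli_product_FKG {V : Type*} [Countable V]
    (p : ℝ) (hp0 : 0 ≤ p) (hp1 : p ≤ 1)
    (P : Measure (V → Bool)) [IsProbabilityMeasure P]
    (hP : ∀ (s : Finset V) (f : V → Bool),
      P {ω | ∀ v ∈ s, ω v = f v} =
        ∏ v ∈ s, (if f v then ENNReal.ofReal p else ENNReal.ofReal (1 - p)))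
    (E F : Set (V → Bool)) (hE : MeasurableSet E) (hF : MeasurableSet F)
    (hEinc : ∀ ω ω' : V → Bool, (∀ v, ω v ≤ ω' v) → ω ∈ E → ω' ∈ E)
    (hFinc : ∀ ω ω' : V → Bool, (∀ v, ω v ≤ ω' v) → ω ∈ F → ω' ∈ F) :
    P E * P F ≤ P (E ∩ F) :=
  bernoulli_product_FKG_general p P hP E F hE hF hEinc hFinc
end
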